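/- Let Z be a standard Gaussian random variable and let F : ℝ → ℝ be a bounded, nondecreasing function that is strictly increasing on some interval. Then E[F(Z)·Z] > 0. -/
import Mathlib


open MeasureTheory Real ProbabilityTheory
open scoped NNReal ENNReal

lemma integrable_id_gaussianReal01 : Integrable (fun x : ℝ => x) (gaussianReal 0 1) := by
  rw [gaussianReal_of_var_ne_zero 0 one_ne_zero,
    integrable_withDensity_iff (measurable_gaussianPDF 0 1)
      (Filter.Eventually.of_forall fun x => ENNReal.ofReal_lt_top)]
  have heq : (fun x : ℝ => x * ((gaussianPDF 0 1 x).toReal)) =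
      fun x : ℝ => (Real.sqrt (2 * π))⁻¹ * (x * Real.exp (-(1/2) * x ^ 2)) := by
    ext x
    rw [gaussianPDF, ENNReal.toReal_ofReal (gaussianPDFReal_nonneg 0 1 x), gaussianPDFReal]
    push_cast
    ring_nf
  rw [heq]
  exact (integrable_mul_exp_neg_mul_sq (by norm_num : (0:ℝ) < 1/2)).const_mul _

lemma integral_id_gaussianReal01 : ∫ x, x ∂(gaussianReal 0 1) = 0 := by
  have hmap : (gaussianReal 0 1).map (fun x : ℝ => -x) = gaussianReal 0 1 := by
    have h := gaussianReal_map_const_mul (μ := 0) (v := 1) (-1)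
    have h1 : (⟨(-1:ℝ)^2, sq_nonneg _⟩ : ℝ≥0) * 1 = 1 := by
      ext; norm_num
    simp only [neg_mul, one_mul, mul_zero, h1] at h
    simpa using h
  have h1 : ∫ x, x ∂(gaussianReal 0 1) = -∫ x, x ∂(gaussianReal 0 1) := by
    nth_rewrite 1 [← hmap]
    rw [integral_map measurable_neg.aemeasurable
      (by rw [hmap]; exact aestronglyMeasurable_id)]
    exact integral_neg _
  linarith [h1]

/-- for bounded, nondecreasing F which increases somewhere,
E[F(Z)Z] > 0 with Z standard Gaussian. -/
theorem monotone_lambda_pos (F : ℝ → ℝ) (hmono : Monotone F)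
    (hbdd : ∃ C : ℝ, ∀ x, |F x| ≤ C)
    (hstrict : ∃ a b : ℝ, a < b ∧ F a < F b) :
    0 < ∫ z, F z * z ∂(gaussianReal 0 1) := by
  obtain ⟨C, hC⟩ := hbdd
  obtain ⟨a, b, hab, hFab⟩ := hstrict
  set γ := gaussianReal 0 1
  have hFmeas : Measurable F := hmono.measurable
  have hid : Integrable (fun x : ℝ => x) γ := integrable_id_gaussianReal01
  have hint : Integrable (fun z => F z * z) γ :=
    hid.bdd_mul (hFmeas.aestronglyMeasurable)
      (Filter.Eventually.of_forall fun x => by simpa using hC x)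
  have hint2 : Integrable (fun z => (F z - F 0) * z) γ := by
    have : (fun z => (F z - F 0) * z) = fun z => F z * z - F 0 * z := by
      ext z; ring
    rw [this]
    exact hint.sub (hid.const_mul (F 0))
  have hkey : ∫ z, F z * z ∂γ = ∫ z, (F z - F 0) * z ∂γ := by
    have : ∫ z, (F z - F 0) * z ∂γ = ∫ z, F z * z ∂γ - F 0 * ∫ z, z ∂γ := by
      simp_rw [sub_mul]
      rw [integral_sub hint (hid.const_mul (F 0)), integral_const_mul]
    rw [this, integral_id_gaussianReal01]
    ring
  rw [hkey]
  have hnonneg : ∀ z, 0 ≤ (F z - F 0) * z := by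
    intro z
    rcases le_total z 0 with hz | hz
    · have h1 : F z ≤ F 0 := hmono hz
      nlinarith [mul_nonneg (by linarith : (0:ℝ) ≤ F 0 - F z) (by linarith : (0:ℝ) ≤ -z)]
    · exact mul_nonneg (by simpa using hmono hz) hz
  rw [integral_pos_iff_support_of_nonneg hnonneg hint2]
  -- find an open set inside the support
  have habs : volume ≪ γ := gaussianReal_absolutelyContinuous' 0 one_ne_zero
  rcases lt_or_ge (F a) (F 0) with h0 | h0
  · -- support contains Iio (min a 0)
    have hsub : Set.Iio (min a 0) ⊆ Function.support fun z => (F z - F 0) * z := by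
      intro z hz
      simp only [Set.mem_Iio, lt_min_iff] at hz
      have h1 : F z ≤ F a := hmono hz.1.le
      have h2 : F z - F 0 < 0 := by linarith
      exact ne_of_gt (mul_pos_of_neg_of_neg h2 hz.2)
    refine lt_of_lt_of_le ?_ (measure_mono hsub)
    by_contra h
    push_neg at h
    have : γ (Set.Iio (min a 0)) = 0 := le_antisymm h bot_le
    have := habs this
    rw [Real.volume_Iio] at this
    exact ENNReal.top_ne_zero this
  · -- then F 0 ≤ F a < F b, support contains Ioi (max b 0)
    have hsub : Set.Ioi (max b 0) ⊆ Function.support fun z => (F z - F 0) * z := by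
      intro z hz
      simp only [Set.mem_Ioi, max_lt_iff] at hz
      have h1 : F b ≤ F z := hmono hz.1.le
      have h2 : 0 < F z - F 0 := by linarith
      exact ne_of_gt (mul_pos h2 hz.2)
    refine lt_of_lt_of_le ?_ (measure_mono hsub)
    by_contra h
    push_neg at h
    have : γ (Set.Ioi (max b 0)) = 0 := le_antisymm h bot_le
    have := habs this
    rw [Real.volume_Ioi] at this
    exact ENNReal.top_ne_zero this
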